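/- Let 𝔷₁ be the 3-dimensional algebra with basis e₁, e₂, e₃ and nonzero products e₁e₁ = e₂, e₁e₂ = (1/2)e₃, e₂e₁ = e₃. Then 𝔷₁ is a Zinbiel algebra, and the space of Zinbiel 2-cocycles modulo coboundaries H²(𝔷₁, ℂ) is 1-dimensional, spanned by the class of 2Δ₁₃ + 3Δ₂₂ + 6Δ₃₁. -/
import Mathlib


/-- Multiplication of `𝔷₁`: `e₁e₁ = e₂`, `e₁e₂ = (1/2)e₃`, `e₂e₁ = e₃`. -/
noncomputable def mulZ1 (a b : Fin 3 → ℂ) : Fin 3 → ℂ := fun k =>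
  if k = 1 then a 0 * b 0
  else if k = 2 then (1 / 2) * (a 0 * b 1) + a 1 * b 0
  else 0

/-- The cocycle `2Δ₁₃ + 3Δ₂₂ + 6Δ₃₁`. -/
noncomputable def θZ1 (a b : Fin 3 → ℂ) : ℂ :=
  2 * (a 0 * b 2) + 3 * (a 1 * b 1) + 6 * (a 2 * b 0)

private noncomputable def E : Fin 3 → (Fin 3 → ℂ) := fun i => Pi.single i 1

private lemma decompE (v : Fin 3 → ℂ) : v = v 0 • E 0 + v 1 • E 1 + v 2 • E 2 := by
  funext k; fin_cases k <;> simp [E, Pi.single_apply]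

private lemma m00 : mulZ1 (E 0) (E 0) = E 1 := by
  funext k; fin_cases k <;> simp [mulZ1, E, Pi.single_apply]

private lemma m01 : mulZ1 (E 0) (E 1) = (1/2 : ℂ) • E 2 := by
  funext k; fin_cases k <;> simp [mulZ1, E, Pi.single_apply]

private lemma m10 : mulZ1 (E 1) (E 0) = E 2 := by
  funext k; fin_cases k <;> simp [mulZ1, E, Pi.single_apply]

private lemma m02 : mulZ1 (E 0) (E 2) = 0 := by
  funext k; fin_cases k <;> simp [mulZ1, E, Pi.single_apply]

private lemma m20 : mulZ1 (E 2) (E 0) = 0 := by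
  funext k; fin_cases k <;> simp [mulZ1, E, Pi.single_apply]

private lemma m11 : mulZ1 (E 1) (E 1) = 0 := by
  funext k; fin_cases k <;> simp [mulZ1, E, Pi.single_apply]

private lemma m12 : mulZ1 (E 1) (E 2) = 0 := by
  funext k; fin_cases k <;> simp [mulZ1, E, Pi.single_apply]

private lemma m21 : mulZ1 (E 2) (E 1) = 0 := by
  funext k; fin_cases k <;> simp [mulZ1, E, Pi.single_apply]

private lemma m22 : mulZ1 (E 2) (E 2) = 0 := by
  funext k; fin_cases k <;> simp [mulZ1, E, Pi.single_apply]

private lemma expand (θ : (Fin 3 → ℂ) →ₗ[ℂ] (Fin 3 → ℂ) →ₗ[ℂ] ℂ) (a b : Fin 3 → ℂ) :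
    θ a b =
      a 0 * b 0 * θ (E 0) (E 0) + a 0 * b 1 * θ (E 0) (E 1) + a 0 * b 2 * θ (E 0) (E 2) +
      a 1 * b 0 * θ (E 1) (E 0) + a 1 * b 1 * θ (E 1) (E 1) + a 1 * b 2 * θ (E 1) (E 2) +
      a 2 * b 0 * θ (E 2) (E 0) + a 2 * b 1 * θ (E 2) (E 1) + a 2 * b 2 * θ (E 2) (E 2) := by
  conv_lhs => rw [decompE a, decompE b]
  simp only [map_add, map_smul, LinearMap.add_apply, LinearMap.smul_apply, smul_eq_mul]
  ring

theorem stmt_13 :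
    (∀ a b c : Fin 3 → ℂ, mulZ1 (mulZ1 a b) c = mulZ1 a (mulZ1 b c + mulZ1 c b)) ∧
    (∀ a b c : Fin 3 → ℂ, θZ1 (mulZ1 a b) c = θZ1 a (mulZ1 b c + mulZ1 c b)) ∧
    (∀ θ : (Fin 3 → ℂ) →ₗ[ℂ] (Fin 3 → ℂ) →ₗ[ℂ] ℂ,
      (∀ a b c : Fin 3 → ℂ, θ (mulZ1 a b) c = θ a (mulZ1 b c + mulZ1 c b)) →
      ∃ (c : ℂ) (f : (Fin 3 → ℂ) →ₗ[ℂ] ℂ),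
        ∀ a b : Fin 3 → ℂ, θ a b = c * θZ1 a b + f (mulZ1 a b)) ∧
    (∀ f : (Fin 3 → ℂ) →ₗ[ℂ] ℂ, ¬ (∀ a b : Fin 3 → ℂ, θZ1 a b = f (mulZ1 a b))) := by
  refine ⟨?_, ?_, ?_, ?_⟩
  · intro a b c
    funext k
    fin_cases k <;> simp [mulZ1] <;> ring
  · intro a b c
    simp only [θZ1, mulZ1, Pi.add_apply]
    norm_num [Fin.ext_iff]
    ring
  · intro θ h
    -- relations among the values on basis vectors
    have r10 : θ (E 1) (E 0) = 2 * θ (E 0) (E 1) := by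
      have := h (E 0) (E 0) (E 0)
      rw [m00] at this
      simpa [map_add, two_mul] using this
    have r11 : θ (E 1) (E 1) = (3/2 : ℂ) * θ (E 0) (E 2) := by
      have := h (E 0) (E 0) (E 1)
      rw [m00, m01, m10] at this
      simp only [map_add, map_smul, smul_eq_mul] at this
      rw [this]; ring
    have r12 : θ (E 1) (E 2) = 0 := by
      have := h (E 0) (E 0) (E 2)
      rw [m00, m02, m20] at this
      simpa using this
    have r20 : θ (E 2) (E 0) = 3 * θ (E 0) (E 2) := by
      have := h (E 0) (E 1) (E 0)
      rw [m01, m10] at this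
      simp only [map_add, map_smul, LinearMap.smul_apply, smul_eq_mul] at this
      have h2 : θ (E 2) (E 0) = 2 * ((1/2 : ℂ) * θ (E 2) (E 0)) := by ring
      rw [h2, this]; ring
    have r21 : θ (E 2) (E 1) = 0 := by
      have := h (E 0) (E 1) (E 1)
      rw [m01, m11] at this
      simp only [map_add, map_smul, LinearMap.smul_apply, smul_eq_mul, add_zero, map_zero] at this
      have h2 : θ (E 2) (E 1) = 2 * ((1/2 : ℂ) * θ (E 2) (E 1)) := by ring
      rw [h2, this]; ring
    have r22 : θ (E 2) (E 2) = 0 := by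
      have := h (E 0) (E 1) (E 2)
      rw [m01, m12, m21] at this
      simp only [map_add, map_smul, LinearMap.smul_apply, smul_eq_mul, add_zero, map_zero] at this
      have h2 : θ (E 2) (E 2) = 2 * ((1/2 : ℂ) * θ (E 2) (E 2)) := by ring
      rw [h2, this]; ring
    refine ⟨θ (E 0) (E 2) / 2,
      (θ (E 0) (E 0)) • (LinearMap.proj 1 : (Fin 3 → ℂ) →ₗ[ℂ] ℂ) +
      (2 * θ (E 0) (E 1)) • (LinearMap.proj 2 : (Fin 3 → ℂ) →ₗ[ℂ] ℂ), ?_⟩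
    intro a b
    rw [expand θ a b, r10, r11, r12, r20, r21, r22]
    simp only [θZ1, mulZ1, LinearMap.add_apply, LinearMap.smul_apply, LinearMap.proj_apply,
      smul_eq_mul]
    norm_num [Fin.ext_iff]
    ring
  · intro f hf
    have := hf (E 0) (E 2)
    rw [m02, map_zero] at this
    simp [θZ1, E, Pi.single_apply] at this
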